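/- arXiv:1603.09030 — 8 statements merged into one kernel-verified Lean document; each statement's English description precedes it below -/
import Mathlib

section
/- If a dynamic LM-measure φ on bounded random variables is monotone and cash-additive (φ_t(X + m) = φ_t(X) + m for all F_t-measurable bounded m), then φ_t is local: 1_A·φ_t(X) = 1_A·φ_t(1_A·X) for all A ∈ F_t. -/
open MeasureTheory

/-- Monotonicity and cash-additivity of a dynamic measure imply locality:
`1_A · φ_t(X) = 1_A · φ_t(1_A · X)` a.s. for all `A ∈ F_t`. -/
theorem monotone_cashAdditive_implies_local
    {Ω : Type*} {F : MeasurableSpace Ω} (𝓕 : ℕ → MeasurableSpace Ω)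
    (h𝓕 : ∀ t, 𝓕 t ≤ F) (hmono𝓕 : ∀ t s, t ≤ s → 𝓕 t ≤ 𝓕 s)
    (μ : Measure Ω) [IsProbabilityMeasure μ]
    (φ : ℕ → (Ω → ℝ) → Ω → ℝ)
    (hmono : ∀ t (X Y : Ω → ℝ), X ≤ᵐ[μ] Y → φ t X ≤ᵐ[μ] φ t Y)
    (hcash : ∀ t (X m : Ω → ℝ), Measurable[𝓕 t] m → (∃ C : ℝ, ∀ ω, |m ω| ≤ C) →
      φ t (X + m) =ᵐ[μ] φ t X + m)
    (t : ℕ) (X : Ω → ℝ) (hX : Measurable X) (hXb : ∃ C : ℝ, ∀ ω, |X ω| ≤ C)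
    (A : Set Ω) (hA : MeasurableSet[𝓕 t] A) :
    A.indicator (φ t X) =ᵐ[μ] A.indicator (φ t (A.indicator X)) := by
  obtain ⟨C, hC⟩ := hXb
  set C0 : ℝ := max C 0 with hC0
  have hC0nn : 0 ≤ C0 := le_max_right _ _
  have hC0b : ∀ ω, |X ω| ≤ C0 := fun ω => (hC ω).trans (le_max_left _ _)
  set m : Ω → ℝ := Aᶜ.indicator (fun _ => C0) with hm
  have hmmeas : Measurable[𝓕 t] m := by
    exact (@measurable_const ℝ Ω _ (𝓕 t) C0).indicator hA.compl
  have hmb : ∃ C : ℝ, ∀ ω, |m ω| ≤ C := by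
    refine ⟨C0, fun ω => ?_⟩
    by_cases hω : ω ∈ Aᶜ
    · simp [hm, Set.indicator_of_mem hω, abs_of_nonneg hC0nn]
    · simp [hm, Set.indicator_of_notMem hω, hC0nn]
  -- pointwise inequalities
  have h1 : X ≤ᵐ[μ] A.indicator X + m := by
    refine Filter.Eventually.of_forall fun ω => ?_
    by_cases hω : ω ∈ A
    · simp [hm, Set.indicator_of_mem hω, Set.indicator_of_notMem (by simpa using hω : ω ∉ Aᶜ)]
    · have : X ω ≤ C0 := (le_abs_self _).trans (hC0b ω)
      simp [hm, Set.indicator_of_notMem hω, Set.indicator_of_mem (by simpa using hω : ω ∈ Aᶜ),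
        this]
  have h2 : A.indicator X ≤ᵐ[μ] X + m := by
    refine Filter.Eventually.of_forall fun ω => ?_
    by_cases hω : ω ∈ A
    · simp [hm, Set.indicator_of_mem hω, Set.indicator_of_notMem (by simpa using hω : ω ∉ Aᶜ)]
    · have : -C0 ≤ X ω := neg_le_of_abs_le (hC0b ω)
      simp only [hm, Set.indicator_of_notMem hω,
        Set.indicator_of_mem (by simpa using hω : ω ∈ Aᶜ), Pi.add_apply]
      linarith
  have hcash1 := hcash t (A.indicator X) m hmmeas hmb
  have hcash2 := hcash t X m hmmeas hmb
  have hineq1 : φ t X ≤ᵐ[μ] φ t (A.indicator X) + m :=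
    ((hmono t _ _ h1).trans hcash1.le)
  have hineq2 : φ t (A.indicator X) ≤ᵐ[μ] φ t X + m :=
    ((hmono t _ _ h2).trans hcash2.le)
  filter_upwards [hineq1, hineq2] with ω hw1 hw2
  by_cases hω : ω ∈ A
  · have hmz : m ω = 0 := Set.indicator_of_notMem (by simpa using hω : ω ∉ Aᶜ) _
    simp only [Pi.add_apply, hmz, add_zero] at hw1 hw2
    simp [Set.indicator_of_mem hω, le_antisymm hw1 hw2]
  · simp [Set.indicator_of_notMem hω]
end

section
/- A dynamic LM-measure φ is weakly acceptance time consistent (φ_t(X) ≥ EssInf_t φ_s(X) for all s > t) if and only if for all X, all s > t, and all F_t-measurable m_t: φ_s(X) ≥ m_t implies φ_t(X) ≥ m_t. -/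
open MeasureTheory

/-- A dynamic LM-measure `φ` is weakly acceptance time consistent
(`φ_t(X) ≥ EssInf_t φ_s(X)` for all `s > t`) iff for all `X`, all `s > t` and all
`F_t`-measurable `m_t`: `φ_s(X) ≥ m_t` implies `φ_t(X) ≥ m_t`. -/
theorem weak_acceptance_iff
    {Ω : Type*} {F : MeasurableSpace Ω} (𝓕 : ℕ → MeasurableSpace Ω)
    (h𝓕 : ∀ t, 𝓕 t ≤ F) (hmono𝓕 : ∀ t s, t ≤ s → 𝓕 t ≤ 𝓕 s)
    (μ : Measure Ω) [IsProbabilityMeasure μ] (T : ℕ)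
    (φ : ℕ → (Ω → ℝ) → Ω → EReal)
    (hφmeas : ∀ t X, Measurable[𝓕 t] (φ t X))
    (hφmono : ∀ t (X Y : Ω → ℝ), X ≤ᵐ[μ] Y → φ t X ≤ᵐ[μ] φ t Y)
    -- `EI t Y` is the `F_t`-conditional essential infimum of `Y`, i.e. the largest
    -- `F_t`-measurable a.s.-minorant of `Y`.
    (EI : ℕ → (Ω → EReal) → Ω → EReal)
    (hEI : ∀ t (Y : Ω → EReal), Measurable[𝓕 t] (EI t Y) ∧ EI t Y ≤ᵐ[μ] Y ∧
      ∀ Z : Ω → EReal, Measurable[𝓕 t] Z → Z ≤ᵐ[μ] Y → Z ≤ᵐ[μ] EI t Y) :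
    (∀ t s, t < s → s ≤ T → ∀ X : Ω → ℝ, EI t (φ s X) ≤ᵐ[μ] φ t X) ↔
    (∀ t s, t < s → s ≤ T → ∀ (X : Ω → ℝ) (m : Ω → EReal), Measurable[𝓕 t] m →
      m ≤ᵐ[μ] φ s X → m ≤ᵐ[μ] φ t X) := by
  constructor
  · intro h t s hts hsT X m hm hle
    exact ((hEI t (φ s X)).2.2 m hm hle).trans (h t s hts hsT X)
  · intro h t s hts hsT X
    exact h t s hts hsT X _ (hEI t (φ s X)).1 (hEI t (φ s X)).2.1
end

section
/- If a dynamic LM-measure φ is μ-acceptance time consistent with respect to a projective update rule μ (i.e., μ is s-invariant and μ_t(m_t) = m_t for F_t-measurable m_t), then φ is weakly acceptance time consistent: φ_t(X) ≥ EssInf_t φ_s(X) for all s > t. -/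
open MeasureTheory

/-- If `φ` is acceptance time consistent with respect to a projective (s-invariant)
update rule `U`, then `φ` is weakly acceptance time consistent:
`φ_t(X) ≥ EssInf_t φ_s(X)` for all `s > t`. -/
theorem projective_acceptance_implies_weak
    {Ω : Type*} {F : MeasurableSpace Ω} (𝓕 : ℕ → MeasurableSpace Ω)
    (h𝓕 : ∀ t, 𝓕 t ≤ F) (hmono𝓕 : ∀ t s, t ≤ s → 𝓕 t ≤ 𝓕 s)
    (μ : Measure Ω) [IsProbabilityMeasure μ] (T : ℕ)
    (φ : ℕ → (Ω → ℝ) → Ω → EReal)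
    (hφmeas : ∀ t X, Measurable[𝓕 t] (φ t X))
    -- `U` is an s-invariant update rule: local and monotone
    (U : ℕ → (Ω → EReal) → Ω → EReal)
    (hUmono : ∀ t (m m' : Ω → EReal), m ≤ᵐ[μ] m' → U t m ≤ᵐ[μ] U t m')
    (hUloc : ∀ t (m : Ω → EReal) (A : Set Ω), MeasurableSet[𝓕 t] A →
      A.indicator (U t m) =ᵐ[μ] A.indicator (U t (A.indicator m)))
    -- projectivity: `U t` fixes `F_t`-measurable arguments
    (hUproj : ∀ t (m : Ω → EReal), Measurable[𝓕 t] m → U t m =ᵐ[μ] m)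
    -- `EI t Y` is the `F_t`-conditional essential infimum of `Y` (largest
    -- `F_t`-measurable a.s.-minorant)
    (EI : ℕ → (Ω → EReal) → Ω → EReal)
    (hEI : ∀ t (Y : Ω → EReal), Measurable[𝓕 t] (EI t Y) ∧ EI t Y ≤ᵐ[μ] Y ∧
      ∀ Z : Ω → EReal, Measurable[𝓕 t] Z → Z ≤ᵐ[μ] Y → Z ≤ᵐ[μ] EI t Y)
    -- `φ` is `U`-acceptance time consistent
    (hTC : ∀ t s, t < s → s ≤ T → ∀ (X : Ω → ℝ) (m : Ω → EReal), Measurable[𝓕 s] m →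
      m ≤ᵐ[μ] φ s X → U t m ≤ᵐ[μ] φ t X) :
    ∀ t s, t < s → s ≤ T → ∀ X : Ω → ℝ, EI t (φ s X) ≤ᵐ[μ] φ t X := by
  intro t s hts hsT X
  obtain ⟨hmeas, hle, -⟩ := hEI t (φ s X)
  have hmeas_s : Measurable[𝓕 s] (EI t (φ s X)) :=
    hmeas.mono (hmono𝓕 t s hts.le) le_rfl
  have h1 : U t (EI t (φ s X)) ≤ᵐ[μ] φ t X :=
    hTC t s hts hsT X _ hmeas_s hle
  have h2 : U t (EI t (φ s X)) =ᵐ[μ] EI t (φ s X) := hUproj t _ hmeas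
  exact h2.symm.trans_le h1
end

section
/- The conditional Value at Risk utility φ^α, defined as the conditional α-quantile, is weakly acceptance time consistent: for any X ∈ L^0 and s > t, if φ^α_s(X) ≥ 0 almost surely then φ^α_t(X) ≥ 0 almost surely. -/
open MeasureTheory

/-- `q` is the conditional Value-at-Risk utility `φ^α_t(X)`, i.e. the essential supremum
(in the a.e. order: the a.e.-least upper bound) of the family
`{Y F_t-measurable : P[X ≤ Y | F_t] ≤ α}`. -/
def IsCondVaRUtility {Ω : Type*} (F 𝓕t : MeasurableSpace Ω) (μ : @Measure Ω F)
    (α : ℝ) (X q : Ω → ℝ) : Prop :=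
  (∀ Y : Ω → ℝ, Measurable[𝓕t] Y →
      (μ[({ω | X ω ≤ Y ω}).indicator (fun _ => (1 : ℝ))|𝓕t] ≤ᵐ[μ] fun _ => α) →
      Y ≤ᵐ[μ] q) ∧
  (∀ W : Ω → ℝ,
      (∀ Y : Ω → ℝ, Measurable[𝓕t] Y →
        (μ[({ω | X ω ≤ Y ω}).indicator (fun _ => (1 : ℝ))|𝓕t] ≤ᵐ[μ] fun _ => α) →
        Y ≤ᵐ[μ] W) →
      q ≤ᵐ[μ] W)

/-- Weak acceptance time consistency of conditional Value at Risk: for `s > t`, if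
`φ^α_s(X) ≥ 0` a.s. then `φ^α_t(X) ≥ 0` a.s. -/
theorem condVaR_weak_acceptance
    {Ω : Type*} {F : MeasurableSpace Ω} (𝓕 : ℕ → MeasurableSpace Ω)
    (h𝓕 : ∀ t, 𝓕 t ≤ F) (hmono𝓕 : ∀ t s, t ≤ s → 𝓕 t ≤ 𝓕 s)
    (μ : Measure Ω) [IsProbabilityMeasure μ]
    (α : ℝ) (hα : α ∈ Set.Ioo (0 : ℝ) 1)
    (X : Ω → ℝ) (hX : Measurable X)
    (t s : ℕ) (hts : t < s) (qt qs : Ω → ℝ)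
    (hqt : IsCondVaRUtility F (𝓕 t) μ α X qt)
    (hqs : IsCondVaRUtility F (𝓕 s) μ α X qs)
    (h0 : (fun _ => (0 : ℝ)) ≤ᵐ[μ] qs) :
    (fun _ => (0 : ℝ)) ≤ᵐ[μ] qt := by
  classical
  have hs : (𝓕 s) ≤ F := h𝓕 s
  have ht : (𝓕 t) ≤ F := h𝓕 t
  -- Step 1: for every ε > 0, the conditional probability of {X ≤ -ε} given 𝓕 s is ≤ α a.e.
  have key : ∀ ε : ℝ, 0 < ε →
      μ[({ω | X ω ≤ -ε}).indicator (fun _ => (1 : ℝ))|𝓕 s] ≤ᵐ[μ] fun _ => α := by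
    intro ε hε
    by_contra hcon
    set g := μ[({ω | X ω ≤ -ε}).indicator (fun _ => (1 : ℝ))|𝓕 s] with hgdef
    set A := {ω | α < g ω} with hAdef
    have hAmeas : MeasurableSet[𝓕 s] A :=
      measurableSet_lt measurable_const stronglyMeasurable_condExp.measurable
    have hApos : μ A ≠ 0 := by
      intro hA0
      apply hcon
      rw [Filter.EventuallyLE, ae_iff]
      convert hA0 using 2
      ext ω
      simp [hAdef, not_le]
    -- the candidate upper bound
    set W : Ω → ℝ := A.piecewise (fun _ => -ε) qs with hWdef
    have hf1meas : MeasurableSet {ω | X ω ≤ -ε} := measurableSet_le hX measurable_const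
    have hf1int : Integrable (({ω | X ω ≤ -ε}).indicator (fun _ => (1 : ℝ))) μ :=
      (integrable_const (1 : ℝ)).indicator hf1meas
    have hW : ∀ Y : Ω → ℝ, Measurable[𝓕 s] Y →
        (μ[({ω | X ω ≤ Y ω}).indicator (fun _ => (1 : ℝ))|𝓕 s] ≤ᵐ[μ] fun _ => α) →
        Y ≤ᵐ[μ] W := by
      intro Y hY hYacc
      have hYqs : Y ≤ᵐ[μ] qs := hqs.1 Y hY hYacc
      set B := {ω | -ε ≤ Y ω} with hBdef
      have hBmeas : MeasurableSet[𝓕 s] B := measurableSet_le measurable_const hY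
      have hptw : B.indicator (({ω | X ω ≤ -ε}).indicator (fun _ => (1 : ℝ)))
          ≤ ({ω | X ω ≤ Y ω}).indicator (fun _ => (1 : ℝ)) := by
        intro ω
        by_cases hB : ω ∈ B
        · by_cases hXε : ω ∈ {ω | X ω ≤ -ε}
          · have hXY : X ω ≤ Y ω := le_trans (hXε : X ω ≤ -ε) hB
            simp [Set.indicator_of_mem, hB, hXε, Set.mem_setOf_eq, hXY]
          · simp [hB, Set.indicator_of_notMem hXε, Set.indicator_nonneg (fun _ _ => zero_le_one)]
        · simp [Set.indicator_of_notMem hB,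
            Set.indicator_nonneg (fun (x : Ω) (_ : x ∈ {ω | X ω ≤ Y ω}) => (zero_le_one : (0:ℝ) ≤ 1))]
      have hf2int : Integrable (({ω | X ω ≤ Y ω}).indicator (fun _ => (1 : ℝ))) μ :=
        (integrable_const (1 : ℝ)).indicator (measurableSet_le hX (hY.mono hs le_rfl))
      have hBint : Integrable (B.indicator (({ω | X ω ≤ -ε}).indicator (fun _ => (1 : ℝ)))) μ :=
        hf1int.indicator (hs _ hBmeas)
      have hmono : μ[B.indicator (({ω | X ω ≤ -ε}).indicator (fun _ => (1 : ℝ)))|𝓕 s]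
          ≤ᵐ[μ] fun _ => α :=
        (condExp_mono hBint hf2int (Filter.Eventually.of_forall hptw)).trans hYacc
      have hloc : μ[B.indicator (({ω | X ω ≤ -ε}).indicator (fun _ => (1 : ℝ)))|𝓕 s]
          =ᵐ[μ] B.indicator g := condExp_indicator hf1int hBmeas
      have hBg : B.indicator g ≤ᵐ[μ] fun _ => α := hloc.symm.le.trans hmono
      filter_upwards [hYqs, hBg] with ω hω1 hω2
      by_cases hA : ω ∈ A
      · have hWω : W ω = -ε := Set.piecewise_eq_of_mem _ _ _ hA
        rw [hWω]
        by_contra hlt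
        push_neg at hlt
        have hB : ω ∈ B := le_of_lt hlt
        rw [Set.indicator_of_mem hB] at hω2
        exact absurd hω2 (not_le.mpr hA)
      · have hWω : W ω = qs ω := Set.piecewise_eq_of_notMem _ _ _ hA
        rw [hWω]; exact hω1
    have hqsW : qs ≤ᵐ[μ] W := hqs.2 W hW
    have : ∀ᵐ ω ∂μ, ω ∉ A := by
      filter_upwards [h0, hqsW] with ω h1 h2 hA
      have : W ω = -ε := Set.piecewise_eq_of_mem _ _ _ hA
      have : (0 : ℝ) ≤ -ε := le_trans h1 (h2.trans_eq this)
      linarith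
    exact hApos (by rwa [← measure_eq_zero_iff_ae_notMem] at this)
  -- Step 2: tower property gives the same at time t, hence -ε ≤ qt a.e.
  have keyt : ∀ ε : ℝ, 0 < ε → (fun _ => -ε) ≤ᵐ[μ] qt := by
    intro ε hε
    have htower : μ[({ω | X ω ≤ -ε}).indicator (fun _ => (1 : ℝ))|𝓕 t]
        =ᵐ[μ] μ[μ[({ω | X ω ≤ -ε}).indicator (fun _ => (1 : ℝ))|𝓕 s]|𝓕 t] :=
      (condExp_condExp_of_le (hmono𝓕 t s hts.le) hs).symm
    have hmono : μ[μ[({ω | X ω ≤ -ε}).indicator (fun _ => (1 : ℝ))|𝓕 s]|𝓕 t]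
        ≤ᵐ[μ] μ[(fun _ => α)|𝓕 t] :=
      condExp_mono integrable_condExp (integrable_const α) (key ε hε)
    have hconst : μ[(fun (_ : Ω) => α)|𝓕 t] = fun _ => α := condExp_const ht α
    have : μ[({ω | X ω ≤ -ε}).indicator (fun _ => (1 : ℝ))|𝓕 t] ≤ᵐ[μ] fun _ => α := by
      refine htower.le.trans (hmono.trans ?_)
      rw [hconst]
    have hYset : {ω | X ω ≤ (fun _ => -ε) ω} = {ω | X ω ≤ -ε} := rfl
    have := hqt.1 (fun _ => -ε) measurable_const (by rw [hYset]; exact this)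
    exact this
  -- Step 3: conclude 0 ≤ qt a.e.
  have hn : ∀ᵐ ω ∂μ, ∀ n : ℕ, -(1 / (n + 1) : ℝ) ≤ qt ω :=
    ae_all_iff.mpr fun n => keyt (1 / (n + 1)) (by positivity)
  filter_upwards [hn] with ω hω
  by_contra hlt
  push_neg at hlt
  obtain ⟨n, hn'⟩ := exists_nat_one_div_lt (show (0 : ℝ) < -qt ω by linarith)
  have := hω n
  linarith
end

section
/- Let D_t ⊆ {Z ∈ L^1 : Z ≥ 0, E[Z|F_t] = 1} be nonempty for each t, and define φ_t(m) := essinf_{Z ∈ D_t} E[Z·m | F_t]. Then each φ_t is local and monotone, and satisfies φ_t(m) = m for every F_t-measurable m, i.e., {φ_t} is a projective update rule. -/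
open MeasureTheory

/-!
`φ_t(m)` is an a.e. greatest lower bound of the family `Z ↦ E[Z m | F_t]`, `Z ∈ D_t`, so each
property of `φ_t` is inherited from that family: it is monotone in `m` because `Z ≥ 0`, it
commutes with multiplication by `1_A` for `A ∈ F_t` (pull-out property), and it equals `m` for
`F_t`-measurable `m` because `E[Z | F_t] = 1`. Locality also uses that an a.e. greatest lower
bound only depends, on a set `A`, on the values of the family on `A`.
-/

section IsAEGLB

variable {α Ω : Type*} [MeasurableSpace Ω]

/-- `f` is the essential infimum of the family `g a`, `a ∈ s`. -/
def IsAEGLB (μ : Measure Ω) (s : Set α) (g : α → Ω → ℝ) (f : Ω → ℝ) : Prop :=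
  (∀ a ∈ s, f ≤ᵐ[μ] g a) ∧ ∀ W : Ω → ℝ, (∀ a ∈ s, W ≤ᵐ[μ] g a) → W ≤ᵐ[μ] f

namespace IsAEGLB

variable {μ : Measure Ω} {s : Set α} {g g' : α → Ω → ℝ} {f f' : Ω → ℝ}

theorem mono (hf : IsAEGLB μ s g f) (hf' : IsAEGLB μ s g' f')
    (hg : ∀ a ∈ s, g' a ≤ᵐ[μ] g a) : f' ≤ᵐ[μ] f :=
  hf.2 f' fun a ha => (hf'.1 a ha).trans (hg a ha)

theorem ae_eq_of_forall_ae_eq {h : Ω → ℝ} (hs : s.Nonempty) (hf : IsAEGLB μ s g f)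
    (hg : ∀ a ∈ s, g a =ᵐ[μ] h) : f =ᵐ[μ] h := by
  obtain ⟨a, ha⟩ := hs
  exact ((hf.1 a ha).trans (hg a ha).le).antisymm (hf.2 h fun b hb => (hg b hb).symm.le)

theorem ae_le_of_ae_eq_on {A : Set Ω} (hf : IsAEGLB μ s g f) (hf' : IsAEGLB μ s g' f')
    (hg : ∀ a ∈ s, ∀ᵐ ω ∂μ, ω ∈ A → g a ω = g' a ω) : ∀ᵐ ω ∂μ, ω ∈ A → f ω ≤ f' ω := by
  classical
  -- `f` on `A` glued to `f'` off `A` is still a lower bound of the family `g'`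
  have hpiecewise : A.piecewise f f' ≤ᵐ[μ] f' := hf'.2 _ fun a ha => by
    filter_upwards [hf.1 a ha, hf'.1 a ha, hg a ha] with ω hfω hf'ω hgω
    by_cases hω : ω ∈ A
    · simpa [hω, ← hgω hω] using hfω
    · simpa [hω] using hf'ω
  filter_upwards [hpiecewise] with ω hω hωA
  simpa [hωA] using hω

theorem indicator_ae_eq_of_ae_eq_on {A : Set Ω} (hf : IsAEGLB μ s g f)
    (hf' : IsAEGLB μ s g' f') (hg : ∀ a ∈ s, ∀ᵐ ω ∂μ, ω ∈ A → g a ω = g' a ω) :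
    A.indicator f =ᵐ[μ] A.indicator f' := by
  have hg' : ∀ a ∈ s, ∀ᵐ ω ∂μ, ω ∈ A → g' a ω = g a ω := fun a ha =>
    (hg a ha).mono fun ω h hω => (h hω).symm
  filter_upwards [hf.ae_le_of_ae_eq_on hf' hg, hf'.ae_le_of_ae_eq_on hf hg'] with ω hle hge
  by_cases hω : ω ∈ A
  · simp [hω, (hle hω).antisymm (hge hω)]
  · simp [hω]

end IsAEGLB

end IsAEGLB

section CondExp

variable {Ω : Type*} {m m₀ : MeasurableSpace Ω} {μ : Measure Ω} {Z f : Ω → ℝ}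

theorem condExp_mul_indicator {A : Set Ω} (hZf : Integrable (Z * f) μ)
    (hA : MeasurableSet[m] A) : μ[Z * A.indicator f | m] =ᵐ[μ] A.indicator (μ[Z * f | m]) := by
  have hmul : Z * A.indicator f = A.indicator (Z * f) :=
    funext fun ω => (Set.indicator_mul_right A Z f).symm
  rw [hmul]
  exact condExp_indicator hZf hA

theorem condExp_mul_of_condExp_eq_one (hf : StronglyMeasurable[m] f) (hZ : Integrable Z μ)
    (hZf : Integrable (Z * f) μ) (hZ1 : μ[Z | m] =ᵐ[μ] 1) : μ[Z * f | m] =ᵐ[μ] f := by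
  filter_upwards [condExp_mul_of_stronglyMeasurable_right hf hZf hZ, hZ1] with ω h h1
  simp [h, h1]

end CondExp

theorem robustExpectation_projective_updateRule_general
    {Ω : Type*} {F : MeasurableSpace Ω} (𝓕 : ℕ → MeasurableSpace Ω)
    (h𝓕 : ∀ t, 𝓕 t ≤ F)
    (μ : Measure Ω) [IsProbabilityMeasure μ]
    (D : ℕ → Set (Ω → ℝ))
    (hDne : ∀ t, (D t).Nonempty)
    (hD : ∀ t, ∀ Z ∈ D t, Integrable Z μ ∧ (0 ≤ᵐ[μ] Z) ∧
      μ[Z|𝓕 t] =ᵐ[μ] fun _ => (1 : ℝ))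
    (φ : ℕ → (Ω → ℝ) → Ω → ℝ)
    -- `φ t m` is the a.e.-greatest lower bound of `{E[Z·m|F_t] : Z ∈ D t}`
    (hφ : ∀ t (m : Ω → ℝ), Measurable m → (∃ C : ℝ, ∀ ω, |m ω| ≤ C) →
      (∀ Z ∈ D t, φ t m ≤ᵐ[μ] μ[fun ω => Z ω * m ω|𝓕 t]) ∧
      (∀ W : Ω → ℝ, (∀ Z ∈ D t, W ≤ᵐ[μ] μ[fun ω => Z ω * m ω|𝓕 t]) →
        W ≤ᵐ[μ] φ t m)) :
    -- monotonicity
    (∀ t (m m' : Ω → ℝ), Measurable m → (∃ C : ℝ, ∀ ω, |m ω| ≤ C) →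
      Measurable m' → (∃ C : ℝ, ∀ ω, |m' ω| ≤ C) →
      m' ≤ᵐ[μ] m → φ t m' ≤ᵐ[μ] φ t m) ∧
    -- locality
    (∀ t (m : Ω → ℝ) (A : Set Ω), Measurable m → (∃ C : ℝ, ∀ ω, |m ω| ≤ C) →
      MeasurableSet[𝓕 t] A →
      A.indicator (φ t m) =ᵐ[μ] A.indicator (φ t (A.indicator m))) ∧
    -- projectivity
    (∀ t (m : Ω → ℝ), Measurable[𝓕 t] m → (∃ C : ℝ, ∀ ω, |m ω| ≤ C) →
      φ t m =ᵐ[μ] m) := by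
  have hglb : ∀ t m, Measurable m → (∃ C : ℝ, ∀ ω, |m ω| ≤ C) →
      IsAEGLB μ (D t) (fun Z => μ[Z * m | 𝓕 t]) (φ t m) := hφ
  have hint : ∀ t, ∀ Z ∈ D t, ∀ m : Ω → ℝ, Measurable m → (∃ C : ℝ, ∀ ω, |m ω| ≤ C) →
      Integrable (Z * m) μ := fun t Z hZ m hm ⟨_, hC⟩ =>
    (hD t Z hZ).1.mul_bdd hm.aestronglyMeasurable (.of_forall hC)
  refine ⟨fun t m m' hm hmb hm' hmb' hle => ?_, fun t m A hm hmb hA => ?_,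
    fun t m hm hmb => ?_⟩
  · refine (hglb t m hm hmb).mono (hglb t m' hm' hmb') fun Z hZ =>
      condExp_mono (hint t Z hZ m' hm' hmb') (hint t Z hZ m hm hmb) ?_
    filter_upwards [hle, (hD t Z hZ).2.1] with ω hω hZω
    exact mul_le_mul_of_nonneg_left hω hZω
  · obtain ⟨C, hC⟩ := hmb
    have hmA : Measurable (A.indicator m) := hm.indicator (h𝓕 t A hA)
    have hmAb : ∃ C : ℝ, ∀ ω, |A.indicator m ω| ≤ C :=
      ⟨C, fun ω => (norm_indicator_le_norm_self m ω).trans (hC ω)⟩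
    refine (hglb t m hm ⟨C, hC⟩).indicator_ae_eq_of_ae_eq_on (hglb t _ hmA hmAb) fun Z hZ => ?_
    filter_upwards [condExp_mul_indicator (hint t Z hZ m hm ⟨C, hC⟩) hA] with ω hω hωA
    simp [hω, hωA]
  · have hmF : Measurable m := hm.mono (h𝓕 t) le_rfl
    exact (hglb t m hmF hmb).ae_eq_of_forall_ae_eq (hDne t) fun Z hZ =>
      condExp_mul_of_condExp_eq_one hm.stronglyMeasurable (hD t Z hZ).1 (hint t Z hZ m hmF hmb)
        (hD t Z hZ).2.2

/-- The family of robust conditional expectations `φ_t(m) = essinf_{Z ∈ D_t} E[Z·m|F_t]`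
(the a.e.-greatest lower bound of the family), built from determining sets
`D_t ⊆ {Z ∈ L¹ : Z ≥ 0, E[Z|F_t] = 1}`, is local, monotone, and projective
(`φ_t(m) = m` for `F_t`-measurable `m`). -/
theorem robustExpectation_projective_updateRule
    {Ω : Type*} {F : MeasurableSpace Ω} (𝓕 : ℕ → MeasurableSpace Ω)
    (h𝓕 : ∀ t, 𝓕 t ≤ F) (hmono𝓕 : ∀ t s, t ≤ s → 𝓕 t ≤ 𝓕 s)
    (μ : Measure Ω) [IsProbabilityMeasure μ]
    (D : ℕ → Set (Ω → ℝ))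
    (hDne : ∀ t, (D t).Nonempty)
    (hD : ∀ t, ∀ Z ∈ D t, Integrable Z μ ∧ (0 ≤ᵐ[μ] Z) ∧
      μ[Z|𝓕 t] =ᵐ[μ] fun _ => (1 : ℝ))
    (φ : ℕ → (Ω → ℝ) → Ω → ℝ)
    -- `φ t m` is the a.e.-greatest lower bound of `{E[Z·m|F_t] : Z ∈ D t}`
    (hφ : ∀ t (m : Ω → ℝ), Measurable m → (∃ C : ℝ, ∀ ω, |m ω| ≤ C) →
      (∀ Z ∈ D t, φ t m ≤ᵐ[μ] μ[fun ω => Z ω * m ω|𝓕 t]) ∧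
      (∀ W : Ω → ℝ, (∀ Z ∈ D t, W ≤ᵐ[μ] μ[fun ω => Z ω * m ω|𝓕 t]) →
        W ≤ᵐ[μ] φ t m)) :
    -- monotonicity
    (∀ t (m m' : Ω → ℝ), Measurable m → (∃ C : ℝ, ∀ ω, |m ω| ≤ C) →
      Measurable m' → (∃ C : ℝ, ∀ ω, |m' ω| ≤ C) →
      m' ≤ᵐ[μ] m → φ t m' ≤ᵐ[μ] φ t m) ∧
    -- locality
    (∀ t (m : Ω → ℝ) (A : Set Ω), Measurable m → (∃ C : ℝ, ∀ ω, |m ω| ≤ C) →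
      MeasurableSet[𝓕 t] A →
      A.indicator (φ t m) =ᵐ[μ] A.indicator (φ t (A.indicator m))) ∧
    -- projectivity
    (∀ t (m : Ω → ℝ), Measurable[𝓕 t] m → (∃ C : ℝ, ∀ ω, |m ω| ≤ C) →
      φ t m =ᵐ[μ] m) :=
  robustExpectation_projective_updateRule_general 𝓕 h𝓕 μ D hDne hD φ hφ
end

section
/- If φ is a dynamic LM-measure that is φ̂-acceptance time consistent with φ̂_t(m) = essinf_{Z∈D_t} E[Zm|F_t] for determining sets D_t, and g : extended reals → reals is increasing and concave, then {g ∘ φ_t} is also φ̂-acceptance time consistent. -/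
open MeasureTheory Set

/-!
On the bounded range of `φ_s X`, an increasing concave `g` is the infimum of the countably many
affine majorants `x ↦ a x + b` with rational `a > 0` and `b`. For each of them, monotonicity,
positive homogeneity and cash additivity (`E[Z|F_t] = 1`) of the robust expectation `φ̂_t`
together with time consistency give
`φ̂_t(g ∘ φ_s X) ≤ a φ̂_t(φ_s X) + b ≤ a φ_t X + b` a.e.; since there are only countably many lines,
the infimum over them can be taken outside a single null set.
-/

/- Off `[p, q]` concavity puts `g` below the secant line; the shift by `g q - g p` covers `[p, q]`,
where only `g x ≤ g q` is available. -/
lemma ConcaveOn.le_secant_add_of_monotone {g : ℝ → ℝ} (hg : ConcaveOn ℝ univ g)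
    (hmono : Monotone g) {p q : ℝ} (hpq : p < q) (x : ℝ) :
    g x ≤ g q + slope g p q * (x - q) + (g q - g p) := by
  have hslope : slope g p q * (q - p) = g q - g p := by
    rw [slope_def_field, div_mul_cancel₀ _ (sub_ne_zero.2 hpq.ne')]
  have hs0 : 0 ≤ slope g p q := by
    rw [slope_def_field]; exact div_nonneg (sub_nonneg.2 (hmono hpq.le)) (sub_nonneg.2 hpq.le)
  have hanti := hg.slope_anti (mem_univ q)
  rcases lt_or_ge x p with hxp | hpx
  · have h := hanti ⟨mem_univ x, (hxp.trans hpq).ne⟩ ⟨mem_univ p, hpq.ne⟩ hxp.le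
    rw [slope_comm g q p, slope_def_field g q x, le_div_iff_of_neg (by linarith)] at h
    linarith [hmono hpq.le]
  rcases le_or_gt x q with hxq | hqx
  · have : g x ≤ g q := hmono hxq
    nlinarith
  · have h := hanti ⟨mem_univ p, hpq.ne⟩ ⟨mem_univ x, hqx.ne'⟩ (hpq.trans hqx).le
    rw [slope_comm g q p, slope_def_field g q x, div_le_iff₀ (by linarith)] at h
    linarith [hmono hpq.le]

lemma exists_rat_affine_approx_above (s c M η : ℝ) (hη : 0 < η) :
    ∃ a b : ℚ, s < a ∧ ∀ x, |x| ≤ M → s * x + c ≤ a * x + b ∧ a * x + b < s * x + c + η := by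
  obtain ⟨a, hsa, has⟩ := exists_rat_btwn (lt_add_of_pos_right s
    (show 0 < η / (4 * (|M| + 1)) by positivity))
  obtain ⟨b, hb, hb'⟩ := exists_rat_btwn (lt_add_of_pos_right (c + (a - s) * |M|)
    (show 0 < η / 2 by positivity))
  refine ⟨a, b, hsa, fun x hx => ?_⟩
  have hδ : (a - s) * |M| ≤ η / 4 := by
    have : (a - s) * (4 * (|M| + 1)) < η := by
      rw [← lt_div_iff₀ (by positivity)]; linarith
    nlinarith [abs_nonneg M]
  have hδx : |(a - s) * x| ≤ (a - s) * |M| := by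
    rw [abs_mul, abs_of_pos (sub_pos.2 hsa)]
    exact mul_le_mul_of_nonneg_left (hx.trans (le_abs_self M)) (sub_pos.2 hsa).le
  have := abs_le.1 hδx
  constructor <;> nlinarith

lemma ConcaveOn.exists_rat_affine_majorant {g : ℝ → ℝ} (hg : ConcaveOn ℝ univ g)
    (hmono : Monotone g) {M x₀ ε : ℝ} (hx₀ : |x₀| ≤ M) (hε : 0 < ε) :
    ∃ a b : ℚ, 0 < a ∧ (∀ x, |x| ≤ M → g x ≤ a * x + b) ∧ a * x₀ + b < g x₀ + ε := by
  have hcont : ContinuousAt g x₀ :=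
    (hg.continuousOn isOpen_univ).continuousAt Filter.univ_mem
  obtain ⟨p, hpx₀, hp⟩ : ∃ p < x₀, g x₀ - ε / 2 < g p :=
    (hcont.eventually (eventually_gt_nhds (by linarith))).exists_lt
  obtain ⟨a, b, hsa, hab⟩ := exists_rat_affine_approx_above (slope g p x₀)
    (g x₀ - slope g p x₀ * x₀ + (g x₀ - g p)) M (ε / 2) (by positivity)
  have hs0 : 0 ≤ slope g p x₀ := by
    rw [slope_def_field]
    exact div_nonneg (sub_nonneg.2 (hmono hpx₀.le)) (sub_nonneg.2 hpx₀.le)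
  refine ⟨a, b, by exact_mod_cast hs0.trans_lt hsa, fun x hx => ?_, ?_⟩
  · have := hg.le_secant_add_of_monotone hmono hpx₀ x
    linarith [(hab x hx).1]
  · linarith [(hab x₀ hx₀).2]

lemma ConcaveOn.le_of_forall_rat_affine_majorant {g : ℝ → ℝ} (hg : ConcaveOn ℝ univ g)
    (hmono : Monotone g) {M x₀ v : ℝ} (hx₀ : |x₀| ≤ M)
    (H : ∀ a b : ℚ, 0 < a → (∀ x, |x| ≤ M → g x ≤ a * x + b) → v ≤ a * x₀ + b) :
    v ≤ g x₀ :=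
  le_of_forall_pos_lt_add fun _ hε =>
    let ⟨a, b, ha, hmaj, hlt⟩ := hg.exists_rat_affine_majorant hmono hx₀ hε
    (H a b ha hmaj).trans_lt hlt

lemma Monotone.exists_abs_comp_le {g : ℝ → ℝ} (hg : Monotone g) {α : Type*} {X : α → ℝ} {C : ℝ}
    (hX : ∀ x, |X x| ≤ C) : ∃ C', ∀ x, |g (X x)| ≤ C' :=
  ⟨max |g (-C)| |g C|, fun x =>
    abs_le_max_abs_abs (hg (neg_le_of_abs_le (hX x))) (hg (le_of_abs_le (hX x)))⟩

section EssInfCondExp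

variable {Ω : Type*} {m m₀ : MeasurableSpace Ω} {μ : Measure Ω}

def IsEssInfCondExp (μ : Measure Ω) (m : MeasurableSpace Ω) (D : Set (Ω → ℝ))
    (X ψ : Ω → ℝ) : Prop :=
  (∀ Z ∈ D, ψ ≤ᵐ[μ] μ[fun ω => Z ω * X ω|m]) ∧
    ∀ W : Ω → ℝ, (∀ Z ∈ D, W ≤ᵐ[μ] μ[fun ω => Z ω * X ω|m]) → W ≤ᵐ[μ] ψ

lemma MeasureTheory.Integrable.mul_of_bounded {Z X : Ω → ℝ} (hZ : Integrable Z μ)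
    (hX : AEStronglyMeasurable X μ) (hXb : ∃ C, ∀ ω, |X ω| ≤ C) :
    Integrable (fun ω => Z ω * X ω) μ :=
  let ⟨C, hC⟩ := hXb
  hZ.mul_bdd hX (c := C) (Filter.Eventually.of_forall hC)

lemma condExp_mul_affine {Z X : Ω → ℝ} (hZ : Integrable Z μ)
    (hZ1 : μ[Z|m] =ᵐ[μ] fun _ => (1 : ℝ)) (hX : AEStronglyMeasurable X μ)
    (hXb : ∃ C, ∀ ω, |X ω| ≤ C) (a b : ℝ) :
    μ[fun ω => Z ω * (a * X ω + b)|m] =ᵐ[μ] fun ω => a * μ[fun ω => Z ω * X ω|m] ω + b := by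
  have hsplit : (fun ω => Z ω * (a * X ω + b)) = a • (fun ω => Z ω * X ω) + b • Z := by
    funext ω; simp only [Pi.add_apply, Pi.smul_apply, smul_eq_mul]; ring
  rw [hsplit]
  filter_upwards [condExp_add ((hZ.mul_of_bounded hX hXb).smul a) (hZ.smul b) m,
    condExp_smul (μ := μ) (m := m) a (fun ω => Z ω * X ω), condExp_smul (μ := μ) (m := m) b Z,
    hZ1] with ω hadd hsa hsb h1
  simp only [hadd, Pi.add_apply, hsa, hsb, Pi.smul_apply, smul_eq_mul, h1, mul_one]

lemma IsEssInfCondExp.ae_le_affine {D : Set (Ω → ℝ)}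
    (hD : ∀ Z ∈ D, Integrable Z μ ∧ (0 ≤ᵐ[μ] Z) ∧ μ[Z|m] =ᵐ[μ] fun _ => (1 : ℝ))
    {X Y ψX ψY : Ω → ℝ} (hψX : IsEssInfCondExp μ m D X ψX) (hψY : IsEssInfCondExp μ m D Y ψY)
    (hX : AEStronglyMeasurable X μ) (hXb : ∃ C, ∀ ω, |X ω| ≤ C)
    (hY : AEStronglyMeasurable Y μ) (hYb : ∃ C, ∀ ω, |Y ω| ≤ C)
    {a b : ℝ} (ha : 0 < a) (hYX : ∀ ω, Y ω ≤ a * X ω + b) :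
    ψY ≤ᵐ[μ] fun ω => a * ψX ω + b := by
  have hlower : ∀ Z ∈ D, ψY ≤ᵐ[μ] fun ω => a * μ[fun ω => Z ω * X ω|m] ω + b := by
    intro Z hZ
    obtain ⟨hZi, hZ0, hZ1⟩ := hD Z hZ
    have haff : ∃ C, ∀ ω, |a * X ω + b| ≤ C := by
      obtain ⟨C, hC⟩ := hXb
      refine ⟨|a| * C + |b|, fun ω => (abs_add_le _ _).trans ?_⟩
      rw [abs_mul]; gcongr; exact hC ω
    have hmono : (fun ω => Z ω * Y ω) ≤ᵐ[μ] fun ω => Z ω * (a * X ω + b) := by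
      filter_upwards [hZ0] with ω hω
      exact mul_le_mul_of_nonneg_left (hYX ω) hω
    calc ψY ≤ᵐ[μ] μ[fun ω => Z ω * Y ω|m] := hψY.1 Z hZ
      _ ≤ᵐ[μ] μ[fun ω => Z ω * (a * X ω + b)|m] :=
        condExp_mono (hZi.mul_of_bounded hY hYb)
          (hZi.mul_of_bounded ((hX.const_mul a).add_const b) haff) hmono
      _ =ᵐ[μ] _ := condExp_mul_affine hZi hZ1 hX hXb a b
  have hψ : (fun ω => (ψY ω - b) / a) ≤ᵐ[μ] ψX := hψX.2 _ fun Z hZ => by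
    filter_upwards [hlower Z hZ] with ω hω
    rw [div_le_iff₀' ha]; linarith
  filter_upwards [hψ] with ω hω
  rw [div_le_iff₀' ha] at hω; linarith

end EssInfCondExp

theorem robust_acceptance_concave_invariant_general
    {Ω : Type*} {F : MeasurableSpace Ω} (𝓕 : ℕ → MeasurableSpace Ω)
    (μ : Measure Ω) (T : ℕ)
    (D : ℕ → Set (Ω → ℝ))
    (hD : ∀ t, ∀ Z ∈ D t, Integrable Z μ ∧ (0 ≤ᵐ[μ] Z) ∧
      μ[Z|𝓕 t] =ᵐ[μ] fun _ => (1 : ℝ))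
    -- `φhat t m` is the robust expectation `essinf_{Z ∈ D t} E[Z·m|F_t]`
    -- (the a.e.-greatest lower bound of the family)
    (φhat : ℕ → (Ω → ℝ) → Ω → ℝ)
    (hφhat : ∀ t (m : Ω → ℝ), Measurable m → (∃ C : ℝ, ∀ ω, |m ω| ≤ C) →
      (∀ Z ∈ D t, φhat t m ≤ᵐ[μ] μ[fun ω => Z ω * m ω|𝓕 t]) ∧
      (∀ W : Ω → ℝ, (∀ Z ∈ D t, W ≤ᵐ[μ] μ[fun ω => Z ω * m ω|𝓕 t]) →
        W ≤ᵐ[μ] φhat t m))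
    -- the dynamic LM-measure `φ`
    (φ : ℕ → (Ω → ℝ) → Ω → ℝ)
    (hφmeas : ∀ t X, Measurable (φ t X))
    (hφbdd : ∀ t X, ∃ C : ℝ, ∀ ω, |φ t X ω| ≤ C)
    -- `g` increasing and concave
    (g : ℝ → ℝ) (hgmono : Monotone g) (hgconc : ConcaveOn ℝ Set.univ g)
    -- `φ` is `φhat`-acceptance time consistent
    (hTC : ∀ t s, t < s → s ≤ T → ∀ X : Ω → ℝ, φhat t (φ s X) ≤ᵐ[μ] φ t X) :
    ∀ t s, t < s → s ≤ T → ∀ X : Ω → ℝ,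
      φhat t (fun ω => g (φ s X ω)) ≤ᵐ[μ] fun ω => g (φ t X ω) := by
  intro t s hts hsT X
  obtain ⟨C, hC⟩ := hφbdd s X
  obtain ⟨C', hC'⟩ := hφbdd t X
  set M := max C C'
  have hφs : ∀ ω, |φ s X ω| ≤ M := fun ω => (hC ω).trans (le_max_left _ _)
  have hφt : ∀ ω, |φ t X ω| ≤ M := fun ω => (hC' ω).trans (le_max_right _ _)
  have hmeas := hφmeas s X
  have hgmeas : Measurable fun ω => g (φ s X ω) := hgmono.measurable.comp hmeas
  have hgbdd := hgmono.exists_abs_comp_le hC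
  have hline : ∀ a b : ℚ, 0 < a → (∀ x, |x| ≤ M → g x ≤ a * x + b) →
      φhat t (fun ω => g (φ s X ω)) ≤ᵐ[μ] fun ω => a * φ t X ω + b := fun a b ha hab => by
    have hψ := IsEssInfCondExp.ae_le_affine (hD t) (hφhat t _ hmeas ⟨C, hC⟩)
      (hφhat t _ hgmeas hgbdd) hmeas.aestronglyMeasurable ⟨C, hC⟩
      hgmeas.aestronglyMeasurable hgbdd (by exact_mod_cast ha) fun ω => hab _ (hφs ω)
    filter_upwards [hψ, hTC t s hts hsT X] with ω h1 h2
    exact h1.trans (by gcongr)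
  have hall : ∀ᵐ ω ∂μ, ∀ a b : ℚ, 0 < a → (∀ x, |x| ≤ M → g x ≤ a * x + b) →
      φhat t (fun ω => g (φ s X ω)) ω ≤ a * φ t X ω + b :=
    ae_all_iff.2 fun a => ae_all_iff.2 fun b => by
      simp only [Filter.eventually_imp_distrib_left]
      exact hline a b
  filter_upwards [hall] with ω hω
  exact hgconc.le_of_forall_rat_affine_majorant hgmono (hφt ω) hω

/-- If a dynamic LM-measure `φ` is `φ̂`-acceptance time consistent, where
`φ̂_t(m) = essinf_{Z ∈ D_t} E[Z·m|F_t]` for determining sets `D_t`, and `g` is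
increasing and concave, then `g ∘ φ` is also `φ̂`-acceptance time consistent. -/
theorem robust_acceptance_concave_invariant
    {Ω : Type*} {F : MeasurableSpace Ω} (𝓕 : ℕ → MeasurableSpace Ω)
    (h𝓕 : ∀ t, 𝓕 t ≤ F) (hmono𝓕 : ∀ t s, t ≤ s → 𝓕 t ≤ 𝓕 s)
    (μ : Measure Ω) [IsProbabilityMeasure μ] (T : ℕ)
    (D : ℕ → Set (Ω → ℝ))
    (hDne : ∀ t, (D t).Nonempty)
    (hD : ∀ t, ∀ Z ∈ D t, Integrable Z μ ∧ (0 ≤ᵐ[μ] Z) ∧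
      μ[Z|𝓕 t] =ᵐ[μ] fun _ => (1 : ℝ))
    -- `φhat t m` is the robust expectation `essinf_{Z ∈ D t} E[Z·m|F_t]`
    -- (the a.e.-greatest lower bound of the family)
    (φhat : ℕ → (Ω → ℝ) → Ω → ℝ)
    (hφhat : ∀ t (m : Ω → ℝ), Measurable m → (∃ C : ℝ, ∀ ω, |m ω| ≤ C) →
      (∀ Z ∈ D t, φhat t m ≤ᵐ[μ] μ[fun ω => Z ω * m ω|𝓕 t]) ∧
      (∀ W : Ω → ℝ, (∀ Z ∈ D t, W ≤ᵐ[μ] μ[fun ω => Z ω * m ω|𝓕 t]) →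
        W ≤ᵐ[μ] φhat t m))
    -- the dynamic LM-measure `φ`
    (φ : ℕ → (Ω → ℝ) → Ω → ℝ)
    (hφmeas : ∀ t X, Measurable (φ t X))
    (hφbdd : ∀ t X, ∃ C : ℝ, ∀ ω, |φ t X ω| ≤ C)
    -- `g` increasing and concave
    (g : ℝ → ℝ) (hgmono : Monotone g) (hgconc : ConcaveOn ℝ Set.univ g)
    -- `φ` is `φhat`-acceptance time consistent
    (hTC : ∀ t s, t < s → s ≤ T → ∀ X : Ω → ℝ, φhat t (φ s X) ≤ᵐ[μ] φ t X) :
    ∀ t s, t < s → s ≤ T → ∀ X : Ω → ℝ,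
      φhat t (fun ω => g (φ s X ω)) ≤ᵐ[μ] fun ω => g (φ t X ω) :=
  robust_acceptance_concave_invariant_general (F := F) 𝓕 μ T D hD φhat hφhat φ hφmeas hφbdd g hgmono
    hgconc hTC
end

section
/- Let {φ^x}_{x≥0} be a family of dynamic LM-measures on adapted processes, decreasing in x, each weakly acceptance time consistent in the process sense (φ^x_t(V) ≥ EssInf_t φ^x_{t+1}(V) + V_t). Then the index α_t(V) := esssup_{x≥0} x·1_{{φ^x_t(V) ≥ 0}} is semi-weakly acceptance time consistent: α_t(V) ≥ 1_{{V_t ≥ 0}}·EssInf_t(α_{t+1}(V)) + 1_{{V_t < 0}}·(−∞). -/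
open MeasureTheory

/-- Let `{φ^x}_{x ≥ 0}` be a decreasing family of dynamic LM-measures on adapted
processes, each weakly acceptance time consistent in the process sense
(`φ^x_t(V) ≥ EssInf_t φ^x_{t+1}(V) + V_t`).  Then the acceptability index
`α_t(V) := esssup_{x ≥ 0} x·1_{{φ^x_t(V) ≥ 0}}` is semi-weakly acceptance time
consistent: `α_t(V) ≥ 1_{{V_t ≥ 0}}·EssInf_t(α_{t+1}(V)) + 1_{{V_t < 0}}·(−∞)`. -/
theorem index_semiWeak_acceptance
    {Ω : Type*} {F : MeasurableSpace Ω} (𝓕 : ℕ → MeasurableSpace Ω)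
    (h𝓕 : ∀ t, 𝓕 t ≤ F) (hmono𝓕 : ∀ t s, t ≤ s → 𝓕 t ≤ 𝓕 s)
    (μ : Measure Ω) [IsProbabilityMeasure μ] (T : ℕ)
    (φ : ℝ → ℕ → (ℕ → Ω → ℝ) → Ω → EReal)
    -- the family is decreasing in `x`
    (hdec : ∀ x y : ℝ, y ≤ x → ∀ t (V : ℕ → Ω → ℝ), (∀ i, Measurable[𝓕 i] (V i)) →
      φ x t V ≤ᵐ[μ] φ y t V)
    -- `EI t Y` is the `F_t`-conditional essential infimum of `Y` (largest
    -- `F_t`-measurable a.s.-minorant)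
    (EI : ℕ → (Ω → EReal) → Ω → EReal)
    (hEI : ∀ t (Y : Ω → EReal), Measurable[𝓕 t] (EI t Y) ∧ EI t Y ≤ᵐ[μ] Y ∧
      ∀ Z : Ω → EReal, Measurable[𝓕 t] Z → Z ≤ᵐ[μ] Y → Z ≤ᵐ[μ] EI t Y)
    -- each `φ^x` (for `x ≥ 0`) is weakly acceptance time consistent for processes
    (hwTC : ∀ x : ℝ, 0 ≤ x → ∀ t (V : ℕ → Ω → ℝ), (∀ i, Measurable[𝓕 i] (V i)) →
      t < T →
      (fun ω => EI t (φ x (t + 1) V) ω + ((V t ω : ℝ) : EReal)) ≤ᵐ[μ] φ x t V)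
    -- `A t V` is the index `α_t(V) = esssup_{x ≥ 0} x·1_{{φ^x_t(V) ≥ 0}}`,
    -- i.e. the a.e.-least upper bound of that family
    (A : ℕ → (ℕ → Ω → ℝ) → Ω → EReal)
    (hA : ∀ t (V : ℕ → Ω → ℝ), (∀ i, Measurable[𝓕 i] (V i)) →
      (∀ x : ℝ, 0 ≤ x →
        (fun ω => if (0 : EReal) ≤ φ x t V ω then ((x : ℝ) : EReal) else 0)
          ≤ᵐ[μ] A t V) ∧
      (∀ W : Ω → EReal,
        (∀ x : ℝ, 0 ≤ x →
          (fun ω => if (0 : EReal) ≤ φ x t V ω then ((x : ℝ) : EReal) else 0)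
            ≤ᵐ[μ] W) →
        A t V ≤ᵐ[μ] W)) :
    ∀ t (V : ℕ → Ω → ℝ), (∀ i, Measurable[𝓕 i] (V i)) → t < T →
      (fun ω => if 0 ≤ V t ω then EI t (A (t + 1) V) ω else (⊥ : EReal))
        ≤ᵐ[μ] A t V := by
  intro t V hV htT
  obtain ⟨hub, hlub⟩ := hA t V hV
  obtain ⟨hub', hlub'⟩ := hA (t + 1) V hV
  obtain ⟨hEIm, hEIle, hEImax⟩ := hEI t (A (t + 1) V)
  -- nonnegativity of the index
  have hA0 : ∀ᵐ ω ∂μ, (0 : EReal) ≤ A t V ω := by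
    filter_upwards [hub 0 le_rfl] with ω h
    simpa using h
  -- key step for each rational q ≥ 0
  have key : ∀ q : ℚ, ∀ᵐ ω ∂μ, (0:ℝ) ≤ (q:ℝ) →
      (((q:ℝ):EReal) < EI t (A (t + 1) V) ω → 0 ≤ V t ω →
        ((q:ℝ):EReal) ≤ A t V ω) := by
    intro q
    by_cases hq : (0:ℝ) ≤ (q:ℝ)
    · set x : ℝ := (q:ℝ) with hx
      -- Step 1: A(t+1)V ≤ W a.e. where W = x on {φ^x_{t+1} < 0}, ⊤ elsewhere
      have step1 : A (t + 1) V ≤ᵐ[μ]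
          fun ω => if φ x (t + 1) V ω < 0 then ((x:ℝ):EReal) else ⊤ := by
        apply hlub'
        intro y hy
        rcases le_or_gt y x with hyx | hxy
        · filter_upwards with ω
          by_cases h1 : φ x (t + 1) V ω < 0
          · simp only [h1, if_pos]
            by_cases h2 : (0 : EReal) ≤ φ y (t + 1) V ω
            · simp only [h2, if_pos]
              exact_mod_cast EReal.coe_le_coe_iff.mpr hyx
            · simp only [h2, if_neg, not_false_iff]
              exact_mod_cast EReal.coe_le_coe_iff.mpr hq
          · simp [h1]
        · filter_upwards [hdec y x hxy.le (t + 1) V hV] with ω hmon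
          by_cases h1 : φ x (t + 1) V ω < 0
          · have h2 : ¬ (0 : EReal) ≤ φ y (t + 1) V ω :=
              not_le.mpr (lt_of_le_of_lt hmon h1)
            simp only [h1, if_pos, h2, if_neg, not_false_iff]
            exact_mod_cast EReal.coe_le_coe_iff.mpr hq
          · simp [h1]
      -- Step 2: Z ≤ φ^x_{t+1} a.e. where Z = 0 on {x < EI t (A(t+1)V)}, ⊥ else
      have step2 : (fun ω => if ((x:ℝ):EReal) < EI t (A (t + 1) V) ω
            then (0:EReal) else ⊥) ≤ᵐ[μ] φ x (t + 1) V := by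
        filter_upwards [hEIle, step1] with ω h1 h2
        by_cases h3 : ((x:ℝ):EReal) < EI t (A (t + 1) V) ω
        · simp only [h3, if_pos]
          by_contra hneg
          have hlt : φ x (t + 1) V ω < 0 := not_le.mp hneg
          rw [if_pos hlt] at h2
          exact absurd (h3.trans_le (h1.trans h2)) (lt_irrefl _)
        · simp [h3]
      have step3 : Measurable[𝓕 t] (fun ω =>
          if ((x:ℝ):EReal) < EI t (A (t + 1) V) ω then (0:EReal) else ⊥) := by
        exact Measurable.ite (measurableSet_lt measurable_const hEIm)
          measurable_const measurable_const
      have step4 := (hEI t (φ x (t + 1) V)).2.2 _ step3 step2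
      filter_upwards [step4, hwTC x hq t V hV htT, hub x hq] with ω h4 h5 h6
      intro _ hlt hVt
      rw [if_pos hlt] at h4
      have hEInn : (0:EReal) ≤ EI t (φ x (t + 1) V) ω := h4
      have hVnn : (0:EReal) ≤ ((V t ω : ℝ) : EReal) := by exact_mod_cast hVt
      have hsum : (0:EReal) ≤ EI t (φ x (t + 1) V) ω + ((V t ω : ℝ) : EReal) := by
        calc (0:EReal) = 0 + 0 := by simp
        _ ≤ _ := add_le_add hEInn hVnn
      have hphi : (0:EReal) ≤ φ x t V ω := hsum.trans h5
      rw [if_pos hphi] at h6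
      exact h6
    · filter_upwards with ω h
      exact absurd h hq
  have hall : ∀ᵐ ω ∂μ, ∀ q : ℚ, (0:ℝ) ≤ (q:ℝ) →
      (((q:ℝ):EReal) < EI t (A (t + 1) V) ω → 0 ≤ V t ω →
        ((q:ℝ):EReal) ≤ A t V ω) := ae_all_iff.2 key
  filter_upwards [hall, hA0] with ω h1 h2
  by_cases hVt : 0 ≤ V t ω
  · simp only [hVt, if_pos]
    by_contra hc
    have hlt : A t V ω < EI t (A (t + 1) V) ω := not_le.mp hc
    obtain ⟨q, hq1, hq2⟩ := EReal.exists_rat_btwn_of_lt hlt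
    have hq0 : (0:ℝ) ≤ (q:ℝ) := by
      have : (0:EReal) < ((q:ℝ):EReal) := lt_of_le_of_lt h2 hq1
      exact_mod_cast this.le
    exact absurd (h1 q hq0 hq2 hVt) (not_le.mpr hq1)
  · simp [hVt]
end

section
/- The dynamic Gain-Loss Ratio φ_t(V) := E[Σ_{i=t}^T V_i | F_t] / E[(Σ_{i=t}^T V_i)^− | F_t] when E[Σ_{i=t}^T V_i | F_t] > 0 (and 0 otherwise) is semi-weakly acceptance time consistent: φ_t(V) ≥ 1_{{V_t ≥ 0}}·EssInf_t(φ_{t+1}(V)) + 1_{{V_t < 0}}·(−∞) almost surely, for every adapted integrable process V and every t < T. -/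
open MeasureTheory

/-- The dynamic Gain-Loss Ratio of an adapted process `V` at time `t` (horizon `T`):
`φ_t(V) = E[Σ_{i=t}^T V_i | F_t] / E[(Σ_{i=t}^T V_i)⁻ | F_t]` when the conditional
expectation of the sum is positive (with value `+∞` when the denominator vanishes),
and `0` otherwise. -/
noncomputable def dGLR {Ω : Type*} [F : MeasurableSpace Ω] (μ : Measure Ω)
    (𝓕 : ℕ → MeasurableSpace Ω) (T : ℕ) (V : ℕ → Ω → ℝ) (t : ℕ) : Ω → EReal :=
  fun ω =>
    let num := (μ[fun ω' => ∑ i ∈ Finset.Icc t T, V i ω'|𝓕 t]) ω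
    let den := (μ[fun ω' => max (-(∑ i ∈ Finset.Icc t T, V i ω')) 0|𝓕 t]) ω
    if 0 < num then (if den = 0 then (⊤ : EReal) else ((num / den : ℝ) : EReal))
    else 0

/-!
Fix a rational `q > 0` and let `A` be the `F_t`-measurable event on which `V_t ≥ 0` and
`φ_t(V) < q < EssInf_t φ_{t+1}(V)`. Writing `S_s` for the tail sum from `s`, the integral of
`S_{t+1} - q S_{t+1}⁻` over `A` equals that of `E[S_{t+1} | F_{t+1}] - q E[S_{t+1}⁻ | F_{t+1}]`,
which is positive on `A` because `φ_{t+1}(V) > q` there. Since `V_t ≥ 0` on `A`, we have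
`S_{t+1} ≤ S_t`, and `x ↦ x - q x⁻` is monotone, so the integral of `S_t - q S_t⁻` over `A` is
at least as large; but it equals the integral of `E[S_t | F_t] - q E[S_t⁻ | F_t]`, which is
nonpositive on `A` because `φ_t(V) < q`. Hence `A` is null, and a union over rational `q`
gives the inequality almost surely.
-/

open Filter

/-- `dGLR μ 𝓕 T V t ω` is definitionally `gainLossRatio` of the conditional expectations of
the tail sum and of its negative part at `ω`. -/
noncomputable def gainLossRatio (a b : ℝ) : EReal :=
  if 0 < a then (if b = 0 then ⊤ else ((a / b : ℝ) : EReal)) else 0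

section GainLossRatio

variable {a b q : ℝ}

theorem gainLossRatio_nonneg (hb : 0 ≤ b) : 0 ≤ gainLossRatio a b := by
  unfold gainLossRatio
  split_ifs with ha
  · exact le_top
  · exact EReal.coe_nonneg.2 (div_nonneg ha.le hb)
  · exact le_rfl

theorem sub_mul_pos_of_lt_gainLossRatio (hq : 0 ≤ q) (hb : 0 ≤ b)
    (h : (q : EReal) < gainLossRatio a b) : 0 < a - q * b := by
  unfold gainLossRatio at h
  split_ifs at h with ha hb0
  · simpa [hb0] using ha
  · have := (lt_div_iff₀ (lt_of_le_of_ne hb (Ne.symm hb0))).1 (EReal.coe_lt_coe_iff.1 h)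
    linarith
  · exact absurd (EReal.coe_lt_coe_iff.1 h) hq.not_gt

theorem sub_mul_nonpos_of_gainLossRatio_lt (hq : 0 ≤ q) (hb : 0 ≤ b)
    (h : gainLossRatio a b < q) : a - q * b ≤ 0 := by
  unfold gainLossRatio at h
  split_ifs at h with ha hb0
  · exact absurd h not_top_lt
  · have := (div_lt_iff₀ (lt_of_le_of_ne hb (Ne.symm hb0))).1 (EReal.coe_lt_coe_iff.1 h)
    linarith
  · linarith [mul_nonneg hq hb]

theorem Measurable.gainLossRatio {Ω : Type*} {m : MeasurableSpace Ω} {f g : Ω → ℝ}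
    (hf : Measurable f) (hg : Measurable g) :
    Measurable fun ω => gainLossRatio (f ω) (g ω) :=
  Measurable.ite (measurableSet_lt measurable_const hf)
    (Measurable.ite (hg (measurableSet_singleton 0)) measurable_const
      (measurable_coe_real_ereal.comp (hf.div hg)))
    measurable_const

end GainLossRatio

theorem Finset.sum_Icc_succ_le_sum_Icc {M : Type*} [AddCommMonoid M] [PartialOrder M]
    [IsOrderedAddMonoid M] {f : ℕ → M} {t : ℕ} (T : ℕ) (ht : 0 ≤ f t) :
    ∑ i ∈ Finset.Icc (t + 1) T, f i ≤ ∑ i ∈ Finset.Icc t T, f i := by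
  refine Finset.sum_le_sum_of_subset_of_nonneg (Finset.Icc_subset_Icc t.le_succ le_rfl) ?_
  intro i hi hi'
  obtain rfl : i = t := by simp only [Finset.mem_Icc] at hi hi'; omega
  exact ht

theorem ae_le_of_measure_pos_rat_gap_eq_zero {α : Type*} {m : MeasurableSpace α}
    {μ : Measure α} {p : α → Prop} {f g : α → EReal} (hg : ∀ᵐ x ∂μ, 0 ≤ g x)
    (h : ∀ q : ℚ, 0 < q →
      μ {x | p x ∧ ((q : ℝ) : EReal) < f x ∧ g x < ((q : ℝ) : EReal)} = 0) :
    ∀ᵐ x ∂μ, p x → f x ≤ g x := by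
  have hgap : ∀ᵐ x ∂μ, ∀ q : {q : ℚ // 0 < q},
      x ∉ {x | p x ∧ ((q : ℝ) : EReal) < f x ∧ g x < ((q : ℝ) : EReal)} :=
    ae_all_iff.2 fun q => measure_eq_zero_iff_ae_notMem.1 (h q q.2)
  filter_upwards [hgap, hg] with x hx hgx hpx
  by_contra! hlt
  obtain ⟨q, hgq, hqf⟩ := EReal.exists_rat_btwn_of_lt hlt
  have hq : (0 : ℝ) < q := EReal.coe_pos.1 (hgx.trans_lt hgq)
  exact hx ⟨q, by exact_mod_cast hq⟩ ⟨hpx, hqf, hgq⟩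

section CondExp

variable {Ω : Type*} {m m0 : MeasurableSpace Ω} {μ : Measure Ω}

theorem measure_eq_zero_of_setIntegral_nonpos_of_ae_pos {f : Ω → ℝ} {A : Set Ω}
    (hA : MeasurableSet A) (hf : IntegrableOn f A μ) (hpos : ∀ᵐ ω ∂μ, ω ∈ A → 0 < f ω)
    (hint : ∫ ω in A, f ω ∂μ ≤ 0) : μ A = 0 := by
  by_contra hA0
  refine hint.not_gt ((setIntegral_pos_iff_support_of_nonneg_ae
    ((ae_restrict_iff' hA).2 (hpos.mono fun ω h hω => (h hω).le)) hf).2 ?_)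
  refine (pos_iff_ne_zero.2 hA0).trans_le (measure_mono_ae ?_)
  filter_upwards [hpos] with ω h hω
  exact ⟨(h hω).ne', hω⟩

theorem setIntegral_condExp_sub_const_mul (hm : m ≤ m0) [SigmaFinite (μ.trim hm)]
    {X Y : Ω → ℝ} (hX : Integrable X μ) (hY : Integrable Y μ) (q : ℝ) {A : Set Ω}
    (hA : MeasurableSet[m] A) :
    ∫ ω in A, (μ[X|m] ω - q * μ[Y|m] ω) ∂μ = ∫ ω in A, (X ω - q * Y ω) ∂μ := by
  rw [integral_sub integrable_condExp.integrableOn (integrable_condExp.const_mul q).integrableOn,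
    integral_sub hX.integrableOn (hY.const_mul q).integrableOn, integral_const_mul,
    integral_const_mul, setIntegral_condExp hm hX hA, setIntegral_condExp hm hY hA]

theorem measure_eq_zero_of_gainLossRatio_condExp_gap [IsFiniteMeasure μ]
    {m' : MeasurableSpace Ω} (hmm' : m ≤ m') (hm' : m' ≤ m0) {X Y : Ω → ℝ}
    (hX : Integrable X μ) (hY : Integrable Y μ) {A : Set Ω} (hA : MeasurableSet[m] A)
    (hYX : ∀ ω ∈ A, Y ω ≤ X ω) {q : ℝ} (hq : 0 ≤ q)
    (hY_gt : ∀ᵐ ω ∂μ, ω ∈ A →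
      (q : EReal) < gainLossRatio (μ[Y|m'] ω) (μ[fun ω => max (-Y ω) 0|m'] ω))
    (hX_lt : ∀ᵐ ω ∂μ, ω ∈ A →
      gainLossRatio (μ[X|m] ω) (μ[fun ω => max (-X ω) 0|m] ω) < q) :
    μ A = 0 := by
  have hA0 : MeasurableSet[m0] A := hm' _ (hmm' _ hA)
  have hloss_nonneg : ∀ (n : MeasurableSpace Ω) (Z : Ω → ℝ),
      0 ≤ᵐ[μ] μ[fun ω => max (-Z ω) 0|n] := fun n Z =>
    condExp_nonneg (ae_of_all _ fun ω => le_max_right _ _)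
  refine measure_eq_zero_of_setIntegral_nonpos_of_ae_pos
    (f := fun ω => μ[Y|m'] ω - q * μ[fun ω => max (-Y ω) 0|m'] ω) hA0
    (integrable_condExp.sub (integrable_condExp.const_mul q)).integrableOn ?_ ?_
  · filter_upwards [hY_gt, hloss_nonneg m' Y] with ω h hb hω
    exact sub_mul_pos_of_lt_gainLossRatio hq hb (h hω)
  calc ∫ ω in A, (μ[Y|m'] ω - q * μ[fun ω => max (-Y ω) 0|m'] ω) ∂μ
      = ∫ ω in A, (Y ω - q * max (-Y ω) 0) ∂μ :=
        setIntegral_condExp_sub_const_mul hm' hY hY.neg_part q (hmm' _ hA)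
    _ ≤ ∫ ω in A, (X ω - q * max (-X ω) 0) ∂μ := by
        refine setIntegral_mono_on (hY.sub (hY.neg_part.const_mul q)).integrableOn
          (hX.sub (hX.neg_part.const_mul q)).integrableOn hA0 fun ω hω => ?_
        have hloss : max (-X ω) 0 ≤ max (-Y ω) 0 := max_le_max (neg_le_neg (hYX ω hω)) le_rfl
        linarith [hYX ω hω, mul_le_mul_of_nonneg_left hloss hq]
    _ = ∫ ω in A, (μ[X|m] ω - q * μ[fun ω => max (-X ω) 0|m] ω) ∂μ :=
        (setIntegral_condExp_sub_const_mul (hmm'.trans hm') hX hX.neg_part q hA).symm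
    _ ≤ 0 := by
        refine setIntegral_nonpos_ae hA0 ?_
        filter_upwards [hX_lt, hloss_nonneg m X] with ω h hb hω
        exact sub_mul_nonpos_of_gainLossRatio_lt hq hb (h hω)

end CondExp

section DynamicGainLossRatio

variable {Ω : Type*} {F : MeasurableSpace Ω} {μ : Measure Ω} {𝓕 : ℕ → MeasurableSpace Ω}
  {T : ℕ} {V : ℕ → Ω → ℝ}

theorem measurable_dGLR (t : ℕ) : Measurable[𝓕 t] (dGLR μ 𝓕 T V t) :=
  stronglyMeasurable_condExp.measurable.gainLossRatio stronglyMeasurable_condExp.measurable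

theorem dGLR_nonneg (t : ℕ) : ∀ᵐ ω ∂μ, 0 ≤ dGLR μ 𝓕 T V t ω :=
  (condExp_nonneg (ae_of_all _ fun _ => le_max_right _ 0)).mono fun _ hb =>
    gainLossRatio_nonneg hb

end DynamicGainLossRatio

theorem dGLR_semiWeak_acceptance_general
    {Ω : Type*} {F : MeasurableSpace Ω} (𝓕 : ℕ → MeasurableSpace Ω)
    (h𝓕 : ∀ t, 𝓕 t ≤ F) (hmono𝓕 : ∀ t s, t ≤ s → 𝓕 t ≤ 𝓕 s)
    (μ : Measure Ω) [IsProbabilityMeasure μ] (T : ℕ)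
    -- `EI t Y` is the `F_t`-conditional essential infimum of `Y` (largest
    -- `F_t`-measurable a.s.-minorant)
    (EI : ℕ → (Ω → EReal) → Ω → EReal)
    (hEI : ∀ t (Y : Ω → EReal), Measurable[𝓕 t] (EI t Y) ∧ EI t Y ≤ᵐ[μ] Y ∧
      ∀ Z : Ω → EReal, Measurable[𝓕 t] Z → Z ≤ᵐ[μ] Y → Z ≤ᵐ[μ] EI t Y)
    (V : ℕ → Ω → ℝ)
    (hVadapted : ∀ i, Measurable[𝓕 i] (V i))
    (hVint : ∀ i, Integrable (V i) μ)
    (t : ℕ) :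
    (fun ω => if 0 ≤ V t ω then EI t (dGLR μ 𝓕 T V (t + 1)) ω else (⊥ : EReal))
      ≤ᵐ[μ] dGLR μ 𝓕 T V t := by
  obtain ⟨hEI_meas, hEI_le, -⟩ := hEI t (dGLR μ 𝓕 T V (t + 1))
  have hsum_int : ∀ s, Integrable (fun ω => ∑ i ∈ Finset.Icc s T, V i ω) μ := fun s =>
    integrable_finsetSum _ fun i _ => hVint i
  have hgap : ∀ q : ℚ, 0 < q → μ {ω | 0 ≤ V t ω ∧
      ((q : ℝ) : EReal) < EI t (dGLR μ 𝓕 T V (t + 1)) ω ∧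
      dGLR μ 𝓕 T V t ω < ((q : ℝ) : EReal)} = 0 := fun q hq =>
    measure_eq_zero_of_gainLossRatio_condExp_gap (hmono𝓕 t (t + 1) t.le_succ) (h𝓕 _)
      (hsum_int t) (hsum_int (t + 1))
      ((hVadapted t measurableSet_Ici).inter
        ((hEI_meas measurableSet_Ioi).inter (measurable_dGLR t measurableSet_Iio)))
      (fun ω hω => Finset.sum_Icc_succ_le_sum_Icc T hω.1) (by positivity)
      (hEI_le.mono fun ω hle hω => hω.2.1.trans_le hle) (ae_of_all _ fun _ hω => hω.2.2)
  filter_upwards [ae_le_of_measure_pos_rat_gap_eq_zero (dGLR_nonneg t) hgap] with ω hle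
  split_ifs with hV
  · exact hle hV
  · exact bot_le

/-- The dynamic Gain-Loss Ratio is semi-weakly acceptance time consistent:
`φ_t(V) ≥ 1_{{V_t ≥ 0}}·EssInf_t(φ_{t+1}(V)) + 1_{{V_t < 0}}·(−∞)` a.s. -/
theorem dGLR_semiWeak_acceptance
    {Ω : Type*} {F : MeasurableSpace Ω} (𝓕 : ℕ → MeasurableSpace Ω)
    (h𝓕 : ∀ t, 𝓕 t ≤ F) (hmono𝓕 : ∀ t s, t ≤ s → 𝓕 t ≤ 𝓕 s)
    (μ : Measure Ω) [IsProbabilityMeasure μ] (T : ℕ)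
    -- `EI t Y` is the `F_t`-conditional essential infimum of `Y` (largest
    -- `F_t`-measurable a.s.-minorant)
    (EI : ℕ → (Ω → EReal) → Ω → EReal)
    (hEI : ∀ t (Y : Ω → EReal), Measurable[𝓕 t] (EI t Y) ∧ EI t Y ≤ᵐ[μ] Y ∧
      ∀ Z : Ω → EReal, Measurable[𝓕 t] Z → Z ≤ᵐ[μ] Y → Z ≤ᵐ[μ] EI t Y)
    (V : ℕ → Ω → ℝ)
    (hVadapted : ∀ i, Measurable[𝓕 i] (V i))
    (hVint : ∀ i, Integrable (V i) μ)
    (t : ℕ) (ht : t < T) :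
    (fun ω => if 0 ≤ V t ω then EI t (dGLR μ 𝓕 T V (t + 1)) ω else (⊥ : EReal))
      ≤ᵐ[μ] dGLR μ 𝓕 T V t :=
  dGLR_semiWeak_acceptance_general 𝓕 h𝓕 hmono𝓕 μ T EI hEI V hVadapted hVint t
end
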